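/- Let (X,d) be a compact metric space and let f : X → X be a homeomorphism. Then f has h-shadowing if and only if f has shadowing and f⁻¹ is equicontinuous. -/

import Mathlib

open Metric Filter Topology Set

section Defs

variable {X : Type*} [MetricSpace X]

/-- `x` is a `δ`-pseudo-orbit for `f`. -/
def IsPseudoOrbit (f : X → X) (δ : ℝ) (x : ℕ → X) : Prop :=
  ∀ n : ℕ, dist (f (x n)) (x (n + 1)) < δ

/-- `x` is an asymptotic pseudo-orbit for `f`. -/
def IsAsymptoticOrbit (f : X → X) (x : ℕ → X) : Prop :=
  Filter.Tendsto (fun n => dist (f (x n)) (x (n + 1))) Filter.atTop (nhds 0)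

/-- the point `y` `ε`-shadows the sequence `x`. -/
def Shadows (f : X → X) (ε : ℝ) (y : X) (x : ℕ → X) : Prop :=
  ∀ n : ℕ, dist (f^[n] y) (x n) < ε

/-- the point `y` asymptotically shadows the sequence `x`. -/
def AsympShadows (f : X → X) (y : X) (x : ℕ → X) : Prop :=
  Filter.Tendsto (fun n => dist (f^[n] y) (x n)) Filter.atTop (nhds 0)

/-- `f` has shadowing on `Y`. -/
def ShadowingOn (f : X → X) (Y : Set X) : Prop :=
  ∀ ε > 0, ∃ δ > 0, ∀ x : ℕ → X, (∀ n, x n ∈ Y) → IsPseudoOrbit f δ x →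
    ∃ y : X, Shadows f ε y x

/-- `f` has h-shadowing on `Y`. -/
def HShadowingOn (f : X → X) (Y : Set X) : Prop :=
  ∀ ε > 0, ∃ δ > 0, ∀ (x : ℕ → X) (m : ℕ), (∀ i ≤ m, x i ∈ Y) →
    (∀ i < m, dist (f (x i)) (x (i + 1)) < δ) →
    ∃ y : X, (∀ i < m, dist (f^[i] y) (x i) < ε) ∧ f^[m] y = x m

/-- `f` has limit shadowing on `Y`. -/
def LimitShadowingOn (f : X → X) (Y : Set X) : Prop :=
  ∀ x : ℕ → X, (∀ n, x n ∈ Y) → IsAsymptoticOrbit f x → ∃ y : X, AsympShadows f y x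

/-- `f` has s-limit shadowing on `Y`. -/
def SLimitShadowingOn (f : X → X) (Y : Set X) : Prop :=
  ∀ ε > 0, ∃ δ > 0,
    (∀ x : ℕ → X, (∀ n, x n ∈ Y) → IsPseudoOrbit f δ x → ∃ y : X, Shadows f ε y x) ∧
    (∀ x : ℕ → X, (∀ n, x n ∈ Y) → IsPseudoOrbit f δ x → IsAsymptoticOrbit f x →
      ∃ y : X, Shadows f ε y x ∧ AsympShadows f y x)

/-- all iterates of `g` are uniformly equicontinuous. -/
def EquicontinuousIter (g : X → X) : Prop :=
  ∀ ε > 0, ∃ δ > 0, ∀ x y : X, dist x y < δ → ∀ n : ℕ, dist (g^[n] x) (g^[n] y) < ε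

end Defs

/-!
Shadowing follows from h-shadowing by compactness: a limit point of the points shadowing
longer and longer initial segments shadows the whole pseudo-orbit. For equicontinuity of `f⁻¹`,
given `a, b` close and `n`, the orbit segment of `f⁻ⁿ a` followed by a jump from `a` to `b` is a
pseudo-orbit, and the point h-shadowing it must be `f⁻ⁿ b`, which is therefore close to
`f⁻ⁿ a`.
Conversely, extend a finite pseudo-orbit ending at `x m` by the forward orbit of `x m` and
shadow it by `y`; then `f⁻ᵐ (x m)` hits `x m` exactly, and it stays close to the pseudo-orbit
because its first `m` iterates are the backward iterates of `x m`, which by equicontinuity of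
`f⁻¹` stay close to those of the nearby point `fᵐ y`.
-/

lemma Equiv.symm_iterate_sub_iterate_apply {X : Type*} (f : X ≃ X) {i m : ℕ} (hi : i ≤ m)
    (y : X) :
    (⇑f.symm)^[m - i] ((⇑f)^[m] y) = (⇑f)^[i] y := by
  rw [← Nat.sub_add_cancel hi, Function.iterate_add_apply, Nat.add_sub_cancel]
  exact (f.leftInverse_symm.iterate _) _

section Shadowing

variable {X : Type*} [MetricSpace X]

lemma dist_update_orbit_lt (f : X → X) {δ : ℝ} (hδ : 0 < δ) {w b : X} {n : ℕ}
    (hb : dist (f^[n] w) b < δ) :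
    ∀ i < n, dist (f (Function.update (fun i => f^[i] w) n b i))
      (Function.update (fun i => f^[i] w) n b (i + 1)) < δ := by
  intro i hi
  rw [Function.update_of_ne hi.ne, ← Function.iterate_succ_apply' f]
  rcases (Nat.succ_le_of_lt hi).eq_or_lt with h | h
  · subst h
    rwa [Function.update_self]
  · rwa [Function.update_of_ne h.ne, dist_self]

lemma isPseudoOrbit_extend_orbit (f : X → X) {δ : ℝ} (hδ : 0 < δ) {x : ℕ → X} {m : ℕ}
    (hx : ∀ i < m, dist (f (x i)) (x (i + 1)) < δ) :
    IsPseudoOrbit f δ (fun n => if n ≤ m then x n else f^[n - m] (x m)) := by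
  intro n
  dsimp only
  rcases lt_or_ge n m with hn | hn
  · simpa only [hn.le, Nat.succ_le_of_lt hn, if_true] using hx n hn
  · have hn' : ¬n + 1 ≤ m := by omega
    have hxn : (if n ≤ m then x n else f^[n - m] (x m)) = f^[n - m] (x m) := by
      split_ifs with h
      · rw [le_antisymm h hn, Nat.sub_self, Function.iterate_zero_apply]
      · rfl
    rw [hxn, if_neg hn', ← Function.iterate_succ_apply' f, Nat.succ_sub hn, dist_self]
    exact hδ

theorem HShadowingOn.shadowingOn [CompactSpace X] {f : X → X} (hf : Continuous f) {Y : Set X}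
    (h : HShadowingOn f Y) : ShadowingOn f Y := by
  intro ε hε
  obtain ⟨δ, hδ, hshadow⟩ := h (ε / 2) (half_pos hε)
  refine ⟨δ, hδ, fun x hxY hx => ?_⟩
  choose y hy _ using fun m => hshadow x m (fun i _ => hxY i) (fun i _ => hx i)
  obtain ⟨z, -, φ, hφ, hz⟩ := isCompact_univ.tendsto_subseq (fun m => mem_univ (y m))
  refine ⟨z, fun n => ?_⟩
  have hlim : Tendsto (fun k => dist (f^[n] (y (φ k))) (x n)) atTop
      (𝓝 (dist (f^[n] z) (x n))) :=
    ((hf.iterate n).continuousAt.tendsto.comp hz).dist tendsto_const_nhds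
  have hle : dist (f^[n] z) (x n) ≤ ε / 2 := by
    refine le_of_tendsto hlim ?_
    filter_upwards [hφ.tendsto_atTop.eventually_gt_atTop n] with k hk
    exact (hy (φ k) n hk).le
  linarith

theorem HShadowingOn.equicontinuousIter_symm {f : X ≃ X} (h : HShadowingOn f univ) :
    EquicontinuousIter f.symm := by
  intro ε hε
  obtain ⟨δ, hδ, hshadow⟩ := h ε hε
  refine ⟨min δ ε, lt_min hδ hε, fun a b hab n => ?_⟩
  rcases Nat.eq_zero_or_pos n with rfl | hn
  · exact hab.trans_le (min_le_right _ _)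
  set w := (⇑f.symm)^[n] a
  have hw : f^[n] w = a := (f.rightInverse_symm.iterate n) a
  obtain ⟨y, hyx, hyb⟩ := hshadow (Function.update (fun i => f^[i] w) n b) n
    (fun _ _ => mem_univ _)
    (dist_update_orbit_lt f hδ (hw ▸ hab.trans_le (min_le_left _ _)))
  rw [Function.update_self] at hyb
  have hy : y = (⇑f.symm)^[n] b := by rw [← hyb]; exact ((f.leftInverse_symm.iterate n) y).symm
  have := hyx 0 hn
  rwa [Function.update_of_ne hn.ne, Function.iterate_zero_apply, hy, dist_comm] at this

theorem ShadowingOn.hShadowingOn_of_equicontinuousIter_symm {f : X ≃ X} (hs : ShadowingOn f univ)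
    (he : EquicontinuousIter f.symm) : HShadowingOn f univ := by
  intro ε hε
  obtain ⟨γ, hγ, hγe⟩ := he (ε / 2) (half_pos hε)
  obtain ⟨δ, hδ, hshadow⟩ := hs (min γ (ε / 2)) (lt_min hγ (half_pos hε))
  refine ⟨δ, hδ, fun x m _ hx => ?_⟩
  obtain ⟨y, hy⟩ := hshadow _ (fun _ => mem_univ _) (isPseudoOrbit_extend_orbit f hδ hx)
  have hyx : ∀ i ≤ m, dist (f^[i] y) (x i) < min γ (ε / 2) := fun i hi => by
    simpa only [hi, if_true] using hy i
  set z := (⇑f.symm)^[m] (x m)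
  have hz : f^[m] z = x m := (f.rightInverse_symm.iterate m) (x m)
  refine ⟨z, fun i hi => ?_, hz⟩
  have hclose : dist (f^[i] y) (f^[i] z) < ε / 2 := by
    rw [← f.symm_iterate_sub_iterate_apply hi.le y, ← f.symm_iterate_sub_iterate_apply hi.le z,
      hz]
    exact hγe _ _ ((hyx m le_rfl).trans_le (min_le_left _ _)) (m - i)
  calc dist (f^[i] z) (x i) ≤ dist (f^[i] y) (f^[i] z) + dist (f^[i] y) (x i) :=
        dist_triangle_left _ _ _
    _ < ε / 2 + ε / 2 := add_lt_add hclose ((hyx i hi.le).trans_le (min_le_right _ _))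
    _ = ε := add_halves ε

end Shadowing

theorem stmt17 {X : Type*} [MetricSpace X] [CompactSpace X] (f : X ≃ₜ X) :
    HShadowingOn (⇑f) Set.univ ↔
      (ShadowingOn (⇑f) Set.univ ∧ EquicontinuousIter (⇑f.symm)) :=
  ⟨fun h => ⟨h.shadowingOn f.continuous,
      HShadowingOn.equicontinuousIter_symm (f := f.toEquiv) h⟩,
    fun ⟨hs, he⟩ =>
      ShadowingOn.hShadowingOn_of_equicontinuousIter_symm (f := f.toEquiv) hs he⟩
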